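/- arXiv:2301.04522 — 2 statements merged into one kernel-verified Lean document; each statement's English description precedes it below -/
import Mathlib

section
/- Let $\bm{\Sigma}_{gh}$, $h=1,\ldots,M_g$, be positive semidefinite $k\times k$ matrices with $\sum_{h=1}^{M_g}\bm{\Sigma}_{gh}$ positive definite, and suppose $\sup_{g,h}\omega_{\max}\big(\bm{\Sigma}_{gh}(\sum_{h=1}^{M_g}\bm{\Sigma}_{gh})^{-1}\big) \le 1-c$ for some $c\in(0,1)$. Then for any nonzero vectors $\bm{b}_1,\bm{b}_2\in\mathbb{R}^k$, $\sum_{g=1}^G\sum_{h_1=1}^{M_g}\sum_{h_2\neq h_1}\bm{b}_1^\top\bm{\Sigma}_{gh_1}\bm{b}_1\,\bm{b}_2^\top\bm{\Sigma}_{gh_2}\bm{b}_2 \ge c\sum_{g=1}^G\sum_{h_1=1}^{M_g}\sum_{h_2=1}^{M_g}\bm{b}_1^\top\bm{\Sigma}_{gh_1}\bm{b}_1\,\bm{b}_2^\top\bm{\Sigma}_{gh_2}\bm{b}_2$. -/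
/-!
Conjugating by `sqrt (∑ₕ Σ_{gh})⁻¹` turns `Σ_{gh} (∑ₕ Σ_{gh})⁻¹` into a symmetric matrix with the
same spectrum, so the eigenvalue bound becomes the Loewner inequality `Σ_{gh} ≤ (1 - c) ∑ₕ Σ_{gh}`.
Evaluated at `b₂` it says that each term `d_h = b₂ᵀ Σ_{gh} b₂` is at most `(1 - c) ∑ₕ d_h`, i.e.
`∑_{h₂ ≠ h₁} d_{h₂} ≥ c ∑_{h₂} d_{h₂}`; multiplying by the nonnegative `b₁ᵀ Σ_{gh₁} b₁` and
summing gives the claim.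
-/

open Finset Matrix

namespace CFC

open Ring

variable {A : Type*} [PartialOrder A] [Ring A] [StarRing A] [TopologicalSpace A]
  [StarOrderedRing A] [Algebra ℝ A] [ContinuousFunctionalCalculus ℝ A IsSelfAdjoint]
  [NonnegSpectrumClass ℝ A] [IsSemitopologicalRing A] [T2Space A]

lemma spectrum_conjSqrt_ringInverse {a t : A} (ht : IsStrictlyPositive t) :
    spectrum ℝ (conjSqrt t⁻¹ʳ a) = spectrum ℝ (a * t⁻¹ʳ) := by
  obtain ⟨u, hu⟩ : IsUnit (sqrt t⁻¹ʳ) := (isUnit_sqrt_iff _).mpr ht.ringInverse.isUnit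
  have hconj : (u : A) * (a * t⁻¹ʳ) * ↑u⁻¹ = conjSqrt t⁻¹ʳ a := by
    rw [conjSqrt_apply, ← hu, ← sqrt_mul_sqrt_self t⁻¹ʳ ht.ringInverse.nonneg, ← hu]
    simp only [mul_assoc, Units.mul_inv, mul_one]
  rw [← hconj, spectrum.units_conjugate]

lemma le_smul_of_spectrum_mul_ringInverse_le {a t : A} (ha : IsSelfAdjoint a)
    (ht : IsStrictlyPositive t) {α : ℝ} (h : ∀ x ∈ spectrum ℝ (a * t⁻¹ʳ), x ≤ α) :
    a ≤ α • t := by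
  have hb : conjSqrt t⁻¹ʳ a ≤ algebraMap ℝ A α := by
    refine le_algebraMap_of_spectrum_le ?_ ?_
    · rwa [spectrum_conjSqrt_ringInverse ht]
    · rw [conjSqrt_apply]; cfc_tac
  calc a = conjSqrt t (conjSqrt t⁻¹ʳ a) := (conjSqrt_conjSqrt_ringInverse t a).symm
    _ ≤ conjSqrt t (algebraMap ℝ A α) := conjSqrt_le_conjSqrt hb
    _ = α • t := by rw [Algebra.algebraMap_eq_smul_one, map_smul, conjSqrt_one t ht.nonneg]

end CFC

open scoped MatrixOrder in
theorem Matrix.IsHermitian.dotProduct_mulVec_le_of_spectrum_mul_inv_le {n : Type*} [Fintype n]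
    [DecidableEq n] {A T : Matrix n n ℝ} (hA : A.IsHermitian) (hT : T.PosDef) {α : ℝ}
    (h : ∀ t ∈ spectrum ℝ (A * T⁻¹), t ≤ α) (x : n → ℝ) :
    x ⬝ᵥ A *ᵥ x ≤ α * (x ⬝ᵥ T *ᵥ x) := by
  rw [nonsing_inv_eq_ringInverse] at h
  have hle : (α • T - A).PosSemidef :=
    CFC.le_smul_of_spectrum_mul_ringInverse_le hA hT.isStrictlyPositive h
  have := hle.dotProduct_mulVec_nonneg x
  simp only [star_trivial, sub_mulVec, smul_mulVec, dotProduct_sub, dotProduct_smul,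
    smul_eq_mul] at this
  linarith

theorem mul_sum_sum_le_sum_sum_ne {ι : Type*} [Fintype ι] [DecidableEq ι] {a d : ι → ℝ} {c : ℝ}
    (ha : ∀ i, 0 ≤ a i) (hd : ∀ i, d i ≤ (1 - c) * ∑ j, d j) :
    c * ∑ i, ∑ j, a i * d j ≤ ∑ i, ∑ j ∈ univ.filter (· ≠ i), a i * d j := by
  simp only [← mul_sum, filter_ne', sum_erase_eq_sub (mem_univ _)]
  rw [mul_sum]
  gcongr with i
  linarith [mul_le_mul_of_nonneg_left (hd i) (ha i)]

theorem stmt_5_general {k G : ℕ} (M : Fin G → ℕ)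
    (S : (g : Fin G) → Fin (M g) → Matrix (Fin k) (Fin k) ℝ)
    (hpsd : ∀ g h, (S g h).PosSemidef)
    (hpd : ∀ g, (∑ h : Fin (M g), S g h).PosDef)
    (c : ℝ)
    (heig : ∀ g h, ∀ t ∈ spectrum ℝ (S g h * (∑ h' : Fin (M g), S g h')⁻¹), t ≤ 1 - c)
    (b₁ b₂ : Fin k → ℝ) :
    ∑ g : Fin G, ∑ h₁ : Fin (M g), ∑ h₂ ∈ univ.filter (· ≠ h₁),
        (b₁ ⬝ᵥ (S g h₁).mulVec b₁) * (b₂ ⬝ᵥ (S g h₂).mulVec b₂)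
      ≥ c * ∑ g : Fin G, ∑ h₁ : Fin (M g), ∑ h₂ : Fin (M g),
          (b₁ ⬝ᵥ (S g h₁).mulVec b₁) * (b₂ ⬝ᵥ (S g h₂).mulVec b₂) := by
  rw [ge_iff_le, mul_sum]
  gcongr with g
  refine mul_sum_sum_le_sum_sum_ne (fun h ↦ ?_) (fun h ↦ ?_)
  · simpa using (hpsd g h).dotProduct_mulVec_nonneg b₁
  · simpa only [sum_mulVec, dotProduct_sum] using
      (hpsd g h).isHermitian.dotProduct_mulVec_le_of_spectrum_mul_inv_le (hpd g) (heig g h) b₂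

/-- If the `Σ_{gh}` are PSD with `∑_h Σ_{gh}` positive definite, and every (real) eigenvalue of
`Σ_{gh} (∑_h Σ_{gh})⁻¹` is at most `1 - c` for some `c ∈ (0,1)`, then for any nonzero
`b₁, b₂`,
`∑_g ∑_{h₁} ∑_{h₂ ≠ h₁} (b₁ᵀ Σ_{gh₁} b₁)(b₂ᵀ Σ_{gh₂} b₂)
  ≥ c ∑_g ∑_{h₁} ∑_{h₂} (b₁ᵀ Σ_{gh₁} b₁)(b₂ᵀ Σ_{gh₂} b₂)`. -/
theorem stmt_5 {k G : ℕ} (M : Fin G → ℕ)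
    (S : (g : Fin G) → Fin (M g) → Matrix (Fin k) (Fin k) ℝ)
    (hpsd : ∀ g h, (S g h).PosSemidef)
    (hpd : ∀ g, (∑ h : Fin (M g), S g h).PosDef)
    (c : ℝ) (hc0 : 0 < c) (hc1 : c < 1)
    (heig : ∀ g h, ∀ t ∈ spectrum ℝ (S g h * (∑ h' : Fin (M g), S g h')⁻¹), t ≤ 1 - c)
    (b₁ b₂ : Fin k → ℝ) (hb₁ : b₁ ≠ 0) (hb₂ : b₂ ≠ 0) :
    ∑ g : Fin G, ∑ h₁ : Fin (M g), ∑ h₂ ∈ univ.filter (· ≠ h₁),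
        (b₁ ⬝ᵥ (S g h₁).mulVec b₁) * (b₂ ⬝ᵥ (S g h₂).mulVec b₂)
      ≥ c * ∑ g : Fin G, ∑ h₁ : Fin (M g), ∑ h₂ : Fin (M g),
          (b₁ ⬝ᵥ (S g h₁).mulVec b₁) * (b₂ ⬝ᵥ (S g h₂).mulVec b₂) :=
  stmt_5_general M S hpsd hpd c heig b₁ b₂
end

section
/- If for each clustering level $m \in \{0,\ldots,p-1\}$ the test of level $m$ against level $m+1$ rejects with probability tending to $\alpha$ when $m \ge m_0$ (true null) and with probability tending to 1 when $m < m_0$ (false null), and successive test outcomes at true nulls are such that the first test at $m_0$ is asymptotically exact, then the sequential estimator $\hat{m} = \min\{m : \text{test at } m \text{ does not reject}\}$ (with $\hat m = p$ if all reject) satisfies: $P(\hat{m} \le m_0 - 1) \to 0$; if $m_0 \le p-1$ then $P(\hat{m} = m_0) \to 1-\alpha$ and $P(\hat{m} \ge m_0+1) \to \alpha$; and if $m_0 = p$ then $P(\hat{m} = m_0) \to 1$. -/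
/-!
Let `A n` be the event that every test at a false null `m < m₀` rejects. By the union bound
`P(A nᶜ) → 0`, and on `A n` the procedure reaches level `m₀`, so `m̂ < m₀` only off `A n`.
For `m₀ < p`, the events `m̂ = m₀` and `m̂ ≥ m₀ + 1` are `A n` intersected with acceptance resp.
rejection at level `m₀`, whose probabilities tend to `1 - α` and `α`; intersecting with `A n`
does not change the limits. For `m₀ = p` the event `m̂ = p` is `A n` itself.
-/

open Filter MeasureTheory

attribute [local instance] Classical.propDecidable

open scoped ENNReal Topology

section SequentialLevel

noncomputable def sequentialLevel (p : ℕ) (rejects : ℕ → Prop) : ℕ :=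
  if h : ∃ m, m < p ∧ ¬ rejects m then Nat.find h else p

variable {p k : ℕ} {rejects : ℕ → Prop}

theorem le_sequentialLevel_iff :
    k ≤ sequentialLevel p rejects ↔ k ≤ p ∧ ∀ m < k, rejects m := by
  unfold sequentialLevel
  split_ifs with h
  · constructor
    · intro hk
      exact ⟨hk.trans (Nat.find_spec h).1.le, fun m hm => by
        by_contra hrej
        exact Nat.find_min h (hm.trans_le hk) ⟨hm.trans_le (hk.trans (Nat.find_spec h).1.le), hrej⟩⟩
    · rintro ⟨-, hk⟩
      by_contra! hlt
      exact (Nat.find_spec h).2 (hk _ hlt)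
  · push Not at h
    exact ⟨fun hk => ⟨hk, fun m hm => h m (hm.trans_le hk)⟩, And.left⟩

theorem sequentialLevel_le : sequentialLevel p rejects ≤ p := by
  by_contra! h
  exact Nat.not_succ_le_self p (le_sequentialLevel_iff.1 h).1

theorem succ_le_sequentialLevel_iff (hk : k < p) :
    k + 1 ≤ sequentialLevel p rejects ↔ (∀ m < k, rejects m) ∧ rejects k := by
  rw [le_sequentialLevel_iff, Nat.forall_lt_succ_right]
  exact and_iff_right hk

theorem sequentialLevel_eq_iff (hk : k < p) :
    sequentialLevel p rejects = k ↔ (∀ m < k, rejects m) ∧ ¬ rejects k := by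
  rw [le_antisymm_iff, ← not_lt, Nat.lt_iff_add_one_le, and_comm, le_sequentialLevel_iff,
    succ_le_sequentialLevel_iff hk, and_iff_right hk.le]
  tauto

theorem sequentialLevel_eq_self_iff : sequentialLevel p rejects = p ↔ ∀ m < p, rejects m := by
  rw [← sequentialLevel_le.ge_iff_eq, le_sequentialLevel_iff, and_iff_right le_rfl]

end SequentialLevel

section Events

variable {Ω : Type*} {p k : ℕ} {R : ℕ → Set Ω}

theorem setOf_sequentialLevel_lt (hk : k ≤ p) :
    {ω | sequentialLevel p (ω ∈ R ·) < k} = (⋂ m ∈ Finset.range k, R m)ᶜ := by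
  ext ω
  rw [Set.mem_ofPred_eq, ← not_le, le_sequentialLevel_iff, and_iff_right hk]
  simp

theorem setOf_sequentialLevel_eq (hk : k < p) :
    {ω | sequentialLevel p (ω ∈ R ·) = k} = (⋂ m ∈ Finset.range k, R m) ∩ (R k)ᶜ := by
  ext ω
  simp [sequentialLevel_eq_iff hk]

theorem setOf_succ_le_sequentialLevel (hk : k < p) :
    {ω | k + 1 ≤ sequentialLevel p (ω ∈ R ·)} = (⋂ m ∈ Finset.range k, R m) ∩ R k := by
  ext ω
  simp [succ_le_sequentialLevel_iff hk]

theorem setOf_sequentialLevel_eq_self :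
    {ω | sequentialLevel p (ω ∈ R ·) = p} = ⋂ m ∈ Finset.range p, R m := by
  ext ω
  simp [sequentialLevel_eq_self_iff]

end Events

section Limits

variable {Ω ι κ : Type*} [MeasurableSpace Ω] {μ : ι → Measure Ω} {l : Filter ι}

theorem tendsto_measure_compl_of_tendsto [∀ i, IsProbabilityMeasure (μ i)] {S : ι → Set Ω}
    (hS : ∀ i, MeasurableSet (S i)) {c : ℝ≥0∞} (h : Tendsto (fun i => μ i (S i)) l (𝓝 c)) :
    Tendsto (fun i => μ i (S i)ᶜ) l (𝓝 (1 - c)) := by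
  simp_rw [prob_compl_eq_one_sub (hS _)]
  exact ENNReal.Tendsto.sub tendsto_const_nhds h (Or.inl ENNReal.one_ne_top)

theorem tendsto_measure_biUnion_finset_zero {s : Finset κ} {S : ι → κ → Set Ω}
    (h : ∀ k ∈ s, Tendsto (fun i => μ i (S i k)) l (𝓝 0)) :
    Tendsto (fun i => μ i (⋃ k ∈ s, S i k)) l (𝓝 0) := by
  have hsum : Tendsto (fun i => ∑ k ∈ s, μ i (S i k)) l (𝓝 0) := by
    simpa using tendsto_finsetSum s h
  exact tendsto_of_tendsto_of_tendsto_of_le_of_le tendsto_const_nhds hsum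
    (fun _ => zero_le) (fun _ => measure_biUnion_finset_le _ _)

theorem tendsto_measure_inter_of_tendsto_measure_compl_zero {A B : ι → Set Ω} {c : ℝ≥0∞}
    (hA : Tendsto (fun i => μ i (A i)ᶜ) l (𝓝 0)) (hB : Tendsto (fun i => μ i (B i)) l (𝓝 c)) :
    Tendsto (fun i => μ i (A i ∩ B i)) l (𝓝 c) := by
  have hlower : Tendsto (fun i => μ i (B i) - μ i (A i)ᶜ) l (𝓝 c) := by
    simpa using ENNReal.Tendsto.sub hB hA (Or.inr ENNReal.zero_ne_top)
  refine tendsto_of_tendsto_of_tendsto_of_le_of_le hlower hB (fun i => ?_)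
    (fun i => measure_mono Set.inter_subset_right)
  rw [tsub_le_iff_right]
  calc μ i (B i) ≤ μ i (A i ∩ B i ∪ (A i)ᶜ) :=
        measure_mono fun ω hω => (em (ω ∈ A i)).imp (⟨·, hω⟩) id
    _ ≤ μ i (A i ∩ B i) + μ i (A i)ᶜ := measure_union_le _ _

end Limits

theorem stmt_16_general {Ω : Type*} [MeasurableSpace Ω]
    (μ : ℕ → Measure Ω) (hprob : ∀ n, IsProbabilityMeasure (μ n))
    (p m₀ : ℕ) (hm₀p : m₀ ≤ p)
    (R : ℕ → ℕ → Set Ω) (hRmeas : ∀ n m, MeasurableSet (R n m))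
    (α : ℝ) (hα0 : 0 < α)
    (hfalse : ∀ m, m < m₀ → Tendsto (fun n => μ n (R n m)) atTop (nhds 1))
    (htrue : ∀ m, m₀ ≤ m → m < p →
      Tendsto (fun n => μ n (R n m)) atTop (nhds (ENNReal.ofReal α)))
    (mhat : ℕ → Ω → ℕ)
    (hmhat : ∀ n ω, mhat n ω =
      if h : ∃ m, m < p ∧ ω ∉ R n m then Nat.find h else p) :
    Tendsto (fun n => μ n {ω | mhat n ω < m₀}) atTop (nhds 0) ∧
    (m₀ ≤ p - 1 ∧ 0 < p →
      Tendsto (fun n => μ n {ω | mhat n ω = m₀}) atTop (nhds (ENNReal.ofReal (1 - α))) ∧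
      Tendsto (fun n => μ n {ω | m₀ + 1 ≤ mhat n ω}) atTop (nhds (ENNReal.ofReal α))) ∧
    (m₀ = p → Tendsto (fun n => μ n {ω | mhat n ω = m₀}) atTop (nhds 1)) := by
  have := hprob
  obtain rfl : mhat = fun n ω => sequentialLevel p (ω ∈ R n ·) := funext₂ hmhat
  set A : ℕ → Set Ω := fun n => ⋂ m ∈ Finset.range m₀, R n m
  have hA : Tendsto (fun n => μ n (A n)ᶜ) atTop (𝓝 0) := by
    simp only [A, Set.compl_iInter]
    exact tendsto_measure_biUnion_finset_zero fun m hm => by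
      simpa using tendsto_measure_compl_of_tendsto (hRmeas · m) (hfalse m (Finset.mem_range.1 hm))
  refine ⟨by simpa only [setOf_sequentialLevel_lt hm₀p] using hA, fun ⟨_, hp⟩ => ?_, ?_⟩
  · have hm₀ : m₀ < p := by omega
    have hrej := htrue m₀ le_rfl hm₀
    have hacc := tendsto_measure_compl_of_tendsto (hRmeas · m₀) hrej
    rw [← ENNReal.ofReal_one, ← ENNReal.ofReal_sub _ hα0.le] at hacc
    simp only [setOf_sequentialLevel_eq hm₀, setOf_succ_le_sequentialLevel hm₀]
    exact ⟨tendsto_measure_inter_of_tendsto_measure_compl_zero hA hacc,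
      tendsto_measure_inter_of_tendsto_measure_compl_zero hA hrej⟩
  · rintro rfl
    have hall := tendsto_measure_inter_of_tendsto_measure_compl_zero (B := fun _ => Set.univ) hA
      (tendsto_const_nhds.congr fun n => measure_univ.symm)
    simpa only [setOf_sequentialLevel_eq_self, Set.inter_univ] using hall

/-- Asymptotics of the sequential clustering-level testing procedure: if each test at a false
null `m < m₀` rejects with probability tending to 1 and each test at a true null
`m₀ ≤ m < p` rejects with probability tending to `α`, then the selected level
`m̂ = min {m : test at m does not reject}` (with `m̂ = p` if all reject) satisfies
`P(m̂ < m₀) → 0`; if `m₀ ≤ p - 1` then `P(m̂ = m₀) → 1 - α` and `P(m̂ ≥ m₀ + 1) → α`;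
and if `m₀ = p` then `P(m̂ = m₀) → 1`. -/
theorem stmt_16 {Ω : Type*} [MeasurableSpace Ω]
    (μ : ℕ → Measure Ω) (hprob : ∀ n, IsProbabilityMeasure (μ n))
    (p m₀ : ℕ) (hm₀p : m₀ ≤ p)
    (R : ℕ → ℕ → Set Ω) (hRmeas : ∀ n m, MeasurableSet (R n m))
    (α : ℝ) (hα0 : 0 < α) (hα1 : α < 1)
    (hfalse : ∀ m, m < m₀ → Tendsto (fun n => μ n (R n m)) atTop (nhds 1))
    (htrue : ∀ m, m₀ ≤ m → m < p →
      Tendsto (fun n => μ n (R n m)) atTop (nhds (ENNReal.ofReal α)))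
    (mhat : ℕ → Ω → ℕ)
    (hmhat : ∀ n ω, mhat n ω =
      if h : ∃ m, m < p ∧ ω ∉ R n m then Nat.find h else p) :
    Tendsto (fun n => μ n {ω | mhat n ω < m₀}) atTop (nhds 0) ∧
    (m₀ ≤ p - 1 ∧ 0 < p →
      Tendsto (fun n => μ n {ω | mhat n ω = m₀}) atTop (nhds (ENNReal.ofReal (1 - α))) ∧
      Tendsto (fun n => μ n {ω | m₀ + 1 ≤ mhat n ω}) atTop (nhds (ENNReal.ofReal α))) ∧
    (m₀ = p → Tendsto (fun n => μ n {ω | mhat n ω = m₀}) atTop (nhds 1)) :=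
  stmt_16_general μ hprob p m₀ hm₀p R hRmeas α hα0 hfalse htrue mhat hmhat
end
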